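/- Let n ≥ 88 be an integer and suppose f(n) ≥ ⌈n/3⌉ + 1. Then C(n+3, f(n)) < 2^{n+3}/(n+4); in particular f(n+3) > f(n) for n ≥ 88. -/

import Mathlib

/-!
Write `f n = m + 1`. Minimality of `f n` gives `(n + 1) * C(n, m) ≤ 2 ^ n`, and
`C(n + 3, m + 1) / C(n, m) = (n + 1)(n + 2)(n + 3) / ((m + 1)(n + 1 - m)(n + 2 - m))`
is smaller than `8 (n + 1) / (n + 4)` when `n ≤ 3m`, `2m + 2 ≤ n` and `n ≥ 7`; hence
`(n + 4) * C(n + 3, f n) < 2 ^ (n + 3)`. Since `f n ≤ n / 2` and `C(n + 3, ·)` increases up to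
the middle, no `k ≤ f n` passes the threshold for `n + 3`, so `f (n + 3) > f n`.
-/

noncomputable def f (n : ℕ) : ℕ :=
  sInf {k : ℕ | 0 < k ∧ (n.choose k : ℝ) > 2 ^ n / (n + 1)}

namespace Nat

theorem choose_le_choose_of_le_half_left {n j k : ℕ} (hjk : j ≤ k) (hk : k ≤ n / 2) :
    n.choose j ≤ n.choose k := by
  induction k, hjk using Nat.le_induction with
  | base => rfl
  | succ k _ ih => exact (ih (by omega)).trans (choose_le_succ_of_lt_half_left (by omega))

theorem two_pow_lt_add_one_mul_choose_half {n : ℕ} (hn : 2 ≤ n) :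
    2 ^ n < (n + 1) * n.choose (n / 2) := by
  have hmiddle : n.choose 0 < n.choose (n / 2) :=
    calc n.choose 0 = 1 := choose_zero_right n
      _ < n.choose 1 := by rw [choose_one_right]; omega
      _ ≤ n.choose (n / 2) := choose_le_middle 1 n
  calc 2 ^ n = ∑ k ∈ Finset.range (n + 1), n.choose k := (sum_range_choose n).symm
    _ < ∑ _k ∈ Finset.range (n + 1), n.choose (n / 2) :=
      Finset.sum_lt_sum (fun k _ ↦ choose_le_middle k n) ⟨0, by simp, hmiddle⟩
    _ = (n + 1) * n.choose (n / 2) := by simp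

theorem add_one_mul_choose_add_three (m r : ℕ) :
    (m + 1) * (r + 1) * (r + 2) * (m + r + 3).choose (m + 1)
      = (m + r + 1) * (m + r + 2) * (m + r + 3) * (m + r).choose m := by
  have h₁ : (m + r + 1) * (m + r).choose m = (m + r + 1).choose (m + 1) * (m + 1) :=
    add_one_mul_choose_eq (m + r) m
  have h₂ : (m + r + 1).choose (m + 1) * (m + r + 2)
      = (m + r + 2).choose (m + 1) * (r + 1) := by
    rw [choose_mul_succ_eq, show m + r + 1 + 1 - (m + 1) = r + 1 by omega]
  have h₃ : (m + r + 2).choose (m + 1) * (m + r + 3)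
      = (m + r + 3).choose (m + 1) * (r + 2) := by
    rw [choose_mul_succ_eq, show m + r + 2 + 1 - (m + 1) = r + 2 by omega]
  linear_combination (m + 1) * (r + 1) * h₃.symm + (m + 1) * (m + r + 3) * h₂.symm +
    (m + r + 2) * (m + r + 3) * h₁.symm

theorem add_two_mul_add_three_mul_add_four_lt {m r : ℕ} (hr : r ≤ 2 * m) (hm : m + 2 ≤ r)
    (h7 : 7 ≤ m + r) :
    (m + r + 2) * (m + r + 3) * (m + r + 4) < 8 * ((m + 1) * (r + 1) * (r + 2)) := by
  obtain ⟨b, rfl⟩ := Nat.exists_eq_add_of_le hm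
  obtain ⟨a, ha⟩ := Nat.exists_eq_add_of_le hr
  obtain rfl : m = a + b + 2 := by omega
  -- the right side minus the left side expands to `20a + 42b` plus monomials of degree ≥ 2
  -- with nonnegative coefficients, and `h7` says `(a, b) ≠ (0, 0)`
  ring_nf
  omega

theorem add_four_mul_choose_add_three_lt {n m : ℕ} (h7 : 7 ≤ n) (hn : n ≤ 3 * m)
    (hm : 2 * m + 2 ≤ n) (h : (n + 1) * n.choose m ≤ 2 ^ n) :
    (n + 4) * (n + 3).choose (m + 1) < 2 ^ (n + 3) := by
  obtain ⟨r, rfl⟩ := Nat.exists_eq_add_of_le (show m ≤ n by omega)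
  refine Nat.lt_of_mul_lt_mul_left (a := (m + 1) * (r + 1) * (r + 2)) ?_
  calc (m + 1) * (r + 1) * (r + 2) * ((m + r + 4) * (m + r + 3).choose (m + 1))
      = (m + r + 2) * (m + r + 3) * (m + r + 4) * ((m + r + 1) * (m + r).choose m) := by
        rw [mul_left_comm, add_one_mul_choose_add_three]; ring
    _ ≤ (m + r + 2) * (m + r + 3) * (m + r + 4) * 2 ^ (m + r) := Nat.mul_le_mul_left _ h
    _ < 8 * ((m + 1) * (r + 1) * (r + 2)) * 2 ^ (m + r) :=
        Nat.mul_lt_mul_of_pos_right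
          (add_two_mul_add_three_mul_add_four_lt (by omega) (by omega) h7) (by positivity)
    _ = (m + 1) * (r + 1) * (r + 2) * 2 ^ (m + r + 3) := by ring

end Nat

theorem two_pow_div_lt_choose_iff {n k : ℕ} :
    (2 ^ n / (n + 1) : ℝ) < n.choose k ↔ 2 ^ n < (n + 1) * n.choose k := by
  rw [div_lt_iff₀ (by positivity), mul_comm]
  exact_mod_cast Iff.rfl

theorem f_spec {n : ℕ} (hn : 2 ≤ n) :
    0 < f n ∧ 2 ^ n < (n + 1) * n.choose (f n) ∧ f n ≤ n / 2 := by
  have hhalf : n / 2 ∈ {k : ℕ | 0 < k ∧ (n.choose k : ℝ) > 2 ^ n / (n + 1)} :=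
    ⟨by omega, two_pow_div_lt_choose_iff.2 (Nat.two_pow_lt_add_one_mul_choose_half hn)⟩
  obtain ⟨hpos, hlt⟩ := Nat.sInf_mem ⟨_, hhalf⟩
  exact ⟨hpos, two_pow_div_lt_choose_iff.1 hlt, Nat.sInf_le hhalf⟩

theorem add_one_mul_choose_le_of_lt_f {n k : ℕ} (hk : 0 < k) (hkf : k < f n) :
    (n + 1) * n.choose k ≤ 2 ^ n := by
  by_contra! h
  exact Nat.notMem_of_lt_sInf hkf ⟨hk, two_pow_div_lt_choose_iff.2 h⟩

theorem lt_f_of_add_one_mul_choose_le {n k : ℕ} (hn : 2 ≤ n) (hk : k ≤ n / 2)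
    (h : (n + 1) * n.choose k ≤ 2 ^ n) : k < f n := by
  by_contra! hfk
  obtain ⟨-, hlt, -⟩ := f_spec hn
  have hmono := Nat.mul_le_mul_left (n + 1) (Nat.choose_le_choose_of_le_half_left hfk hk)
  exact (hlt.trans_le (hmono.trans h)).false

theorem choose_add_three_lt (n : ℕ) (hn : 88 ≤ n) (hf : f n ≥ (n + 2) / 3 + 1) :
    ((n + 3).choose (f n) : ℝ) < 2 ^ (n + 3) / (n + 4) ∧ f (n + 3) > f n := by
  obtain ⟨hpos, -, hhalf⟩ := f_spec (show 2 ≤ n by omega)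
  obtain ⟨m, hm⟩ : ∃ m, f n = m + 1 := ⟨f n - 1, by omega⟩
  have hmin : (n + 1) * n.choose m ≤ 2 ^ n :=
    add_one_mul_choose_le_of_lt_f (by omega) (by omega)
  have hstep : (n + 4) * (n + 3).choose (f n) < 2 ^ (n + 3) := by
    rw [hm]
    exact Nat.add_four_mul_choose_add_three_lt (by omega) (by omega) (by omega) hmin
  refine ⟨?_, lt_f_of_add_one_mul_choose_le (by omega) (by omega) hstep.le⟩
  rw [lt_div_iff₀ (by positivity), mul_comm]
  exact_mod_cast hstep
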